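/- arXiv:2012.05307 — 7 statements merged into one kernel-verified Lean document; each statement's English description precedes it below -/
import Mathlib

section
/- Let F be a field and let M be an n×m matrix over F. Then there exist unitriangular matrices A ∈ T_n(F) and B ∈ T_m(F) such that the product A·M·B is a rook matrix. (Existence part of the enhanced Bruhat decomposition: every orbit of the action of T_n(F) × T_m(F) on n×m matrices contains a rook matrix.) -/
/-- A square matrix is unitriangular if it is upper triangular with 1's on the diagonal. -/
def Matrix.IsUnitriangular {n : ℕ} {R : Type*} [Zero R] [One R]
    (A : Matrix (Fin n) (Fin n) R) : Prop :=
  (∀ i, A i i = 1) ∧ ∀ i j : Fin n, j < i → A i j = 0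

/-- A matrix is a rook matrix if every row and every column contains
at most one nonzero entry. -/
def Matrix.IsRook {n m : ℕ} {F : Type*} [Zero F]
    (R : Matrix (Fin n) (Fin m) F) : Prop :=
  (∀ i j j', R i j ≠ 0 → R i j' ≠ 0 → j = j') ∧
  (∀ i i' j, R i j ≠ 0 → R i' j ≠ 0 → i = i')

/-!
Induction on the number of rows. Let `p` be the leftmost nonzero entry of the last row.
Adding multiples of the last row to the rows above it (left multiplication by a unitriangular
matrix) and multiples of column `p` to the columns right of it (right multiplication) clears
the rest of column `p` and of the last row. The top block is then handled by induction. The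
right unitriangular factor found there may add column `p` into other columns, which would spoil
the last row; since column `p` of the top block is zero, its row and column `p` can be reset to
those of the identity without changing the top block.
-/

namespace Matrix

section Unitriangular

variable {R : Type*} [NonAssocSemiring R] {n : ℕ}

theorem isUnitriangular_one : (1 : Matrix (Fin n) (Fin n) R).IsUnitriangular :=
  ⟨fun _ => one_apply_eq _, fun _ _ h => one_apply_ne h.ne'⟩

theorem isUnitriangular_one_add {E : Matrix (Fin n) (Fin n) R}
    (hE : ∀ i j, j ≤ i → E i j = 0) : (1 + E).IsUnitriangular :=
  ⟨fun i => by simp [hE i i le_rfl], fun i j h => by simp [one_apply_ne h.ne', hE i j h.le]⟩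

theorem IsUnitriangular.mul {A B : Matrix (Fin n) (Fin n) R} (hA : A.IsUnitriangular)
    (hB : B.IsUnitriangular) : (A * B).IsUnitriangular := by
  refine ⟨fun i => ?_, fun i j h =>
    BlockTriangular.mul (b := id) (fun _ _ => hA.2 _ _) (fun _ _ => hB.2 _ _) h⟩
  rw [mul_apply, Finset.sum_eq_single i, hA.1, hB.1, one_mul]
  · intro k _ hk
    rcases hk.lt_or_gt with h | h
    · rw [hA.2 _ _ h, zero_mul]
    · rw [hB.2 _ _ h, mul_zero]
  · simp

end Unitriangular

section Decouple

variable {R : Type*} [NonAssocSemiring R] {ι κ : Type*} [DecidableEq ι]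

def decouple (B : Matrix ι ι R) (p : ι → Prop) [DecidablePred p] : Matrix ι ι R :=
  of fun k j => if p k ∨ p j then (1 : Matrix ι ι R) k j else B k j

theorem IsUnitriangular.decouple {m : ℕ} {B : Matrix (Fin m) (Fin m) R}
    (hB : B.IsUnitriangular) (p : Fin m → Prop) [DecidablePred p] :
    (B.decouple p).IsUnitriangular := by
  refine ⟨fun i => by simp [Matrix.decouple, hB.1 i], fun i j h => ?_⟩
  simp [Matrix.decouple, one_apply_ne h.ne', hB.2 i j h]

variable [Fintype ι] {p : ι → Prop} [DecidablePred p] {X : Matrix κ ι R} {i : κ}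

theorem mul_decouple_apply_of_eq_zero_on (hX : ∀ k, p k → X i k = 0) (B : Matrix ι ι R)
    (j : ι) : (X * B.decouple p) i j = if p j then 0 else (X * B) i j := by
  split_ifs with hj
  · simp [mul_apply, Matrix.decouple, hj, one_apply, hX j hj]
  · refine Finset.sum_congr rfl fun k _ => ?_
    by_cases hk : p k
    · simp [hX k hk]
    · simp [Matrix.decouple, hk, hj]

theorem mul_decouple_apply_of_eq_zero_off (hX : ∀ k, ¬ p k → X i k = 0) (B : Matrix ι ι R)
    (j : ι) : (X * B.decouple p) i j = X i j := by
  rw [mul_apply, Finset.sum_eq_single j]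
  · by_cases hj : p j
    · simp [Matrix.decouple, hj]
    · simp [hX j hj]
  · intro k _ hk
    by_cases hkp : p k
    · simp [Matrix.decouple, hkp, one_apply_ne hk]
    · simp [hX k hkp]
  · simp

end Decouple

section ExtendLast

variable {R : Type*} [NonAssocSemiring R] {n m : ℕ}

/-- The block-diagonal matrix `diag(A, 1)`. -/
def extendLast (A : Matrix (Fin n) (Fin n) R) : Matrix (Fin (n + 1)) (Fin (n + 1)) R :=
  of (Fin.snoc (α := fun _ => Fin (n + 1) → R) (fun i => Fin.snoc (α := fun _ => R) (A i) 0)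
    ((1 : Matrix (Fin (n + 1)) (Fin (n + 1)) R) (Fin.last n)))

@[simp] theorem extendLast_apply_castSucc_castSucc (A : Matrix (Fin n) (Fin n) R) (i j : Fin n) :
    A.extendLast i.castSucc j.castSucc = A i j := by
  simp [extendLast]

@[simp] theorem extendLast_apply_castSucc_last (A : Matrix (Fin n) (Fin n) R) (i : Fin n) :
    A.extendLast i.castSucc (Fin.last n) = 0 := by
  simp [extendLast]

@[simp] theorem extendLast_apply_last (A : Matrix (Fin n) (Fin n) R) (j : Fin (n + 1)) :
    A.extendLast (Fin.last n) j = (1 : Matrix (Fin (n + 1)) (Fin (n + 1)) R) (Fin.last n) j := by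
  simp [extendLast]

theorem IsUnitriangular.extendLast {A : Matrix (Fin n) (Fin n) R} (hA : A.IsUnitriangular) :
    A.extendLast.IsUnitriangular := by
  refine ⟨fun i => ?_, fun i j h => ?_⟩
  · cases i using Fin.lastCases <;> simp [hA.1]
  · cases i using Fin.lastCases with
    | last => simp [one_apply_ne h.ne']
    | cast i =>
      cases j using Fin.lastCases with
      | last => simp
      | cast j => simpa using hA.2 i j (by simpa using h)

theorem extendLast_mul_apply_castSucc (A : Matrix (Fin n) (Fin n) R)
    (X : Matrix (Fin (n + 1)) (Fin m) R) (i : Fin n) (j : Fin m) :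
    (A.extendLast * X) i.castSucc j = (A * X.submatrix Fin.castSucc id) i j := by
  simp [mul_apply, Fin.sum_univ_castSucc]

theorem extendLast_mul_apply_last (A : Matrix (Fin n) (Fin n) R)
    (X : Matrix (Fin (n + 1)) (Fin m) R) (j : Fin m) :
    (A.extendLast * X) (Fin.last n) j = X (Fin.last n) j := by
  rw [mul_apply]
  simp_rw [extendLast_apply_last]
  rw [← mul_apply, Matrix.one_mul]

end ExtendLast

section Rook

def IsRookRow {F ι κ : Type*} [Zero F] (N : Matrix ι κ F) (r : ι) : Prop :=
  ∀ j, N r j ≠ 0 → (∀ j', N r j' ≠ 0 → j' = j) ∧ ∀ i, N i j ≠ 0 → i = r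

theorem isRookRow_of_forall_ne {F ι κ : Type*} [Zero F] {N : Matrix ι κ F} {r : ι} {p : κ}
    (hrow : ∀ j ≠ p, N r j = 0) (hcol : ∀ i ≠ r, N i p = 0) : N.IsRookRow r := by
  intro j hj
  obtain rfl : j = p := by_contra fun h => hj (hrow j h)
  exact ⟨fun j' hj' => by_contra fun h => hj' (hrow j' h),
    fun i hi => by_contra fun h => hi (hcol i h)⟩

variable {n m : ℕ}

theorem IsRook.mono {F : Type*} [Zero F] {R S : Matrix (Fin n) (Fin m) F} (hR : R.IsRook)
    (h : ∀ i j, S i j ≠ 0 → R i j ≠ 0) : S.IsRook :=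
  ⟨fun i j j' h1 h2 => hR.1 i j j' (h _ _ h1) (h _ _ h2),
   fun i i' j h1 h2 => hR.2 i i' j (h _ _ h1) (h _ _ h2)⟩

theorem isRook_of_isRookRow_last {F : Type*} [Zero F] {N : Matrix (Fin (n + 1)) (Fin m) F}
    (hlast : N.IsRookRow (Fin.last n)) (htop : (N.submatrix Fin.castSucc id).IsRook) :
    N.IsRook := by
  refine ⟨fun i j j' hj hj' => ?_, fun i i' j hi hi' => ?_⟩
  · cases i using Fin.lastCases with
    | last => exact ((hlast j hj).1 j' hj').symm
    | cast i => exact htop.1 i j j' hj hj'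
  · cases i using Fin.lastCases with
    | last => exact ((hlast j hi).2 i' hi').symm
    | cast i =>
      cases i' using Fin.lastCases with
      | last => exact (hlast j hi').2 _ hi
      | cast i' => exact congrArg _ (htop.2 i i' j hi hi')

theorem isRook_extendLast_mul_mul_decouple {R : Type*} [NonAssocSemiring R] [DecidableEq R]
    {N : Matrix (Fin (n + 1)) (Fin m) R} (hN : N.IsRookRow (Fin.last n))
    {A : Matrix (Fin n) (Fin n) R} {B : Matrix (Fin m) (Fin m) R}
    (hR : (A * N.submatrix Fin.castSucc id * B).IsRook) :
    (A.extendLast * N * B.decouple (N (Fin.last n) · ≠ 0)).IsRook := by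
  have hcol : ∀ i k, N (Fin.last n) k ≠ 0 → (A * N.submatrix Fin.castSucc id) i k = 0 :=
    fun i k hk => (mul_apply ..).trans <| Finset.sum_eq_zero fun l _ => by
      rw [submatrix_apply, id, not_not.1 fun h => Fin.castSucc_ne_last l ((hN k hk).2 _ h),
        mul_zero]
  have htop : ∀ i j, (A.extendLast * N * B.decouple (N (Fin.last n) · ≠ 0)) i.castSucc j =
      if N (Fin.last n) j ≠ 0 then 0 else (A * N.submatrix Fin.castSucc id * B) i j := by
    intro i j
    rw [mul_apply]
    simp_rw [extendLast_mul_apply_castSucc]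
    rw [← mul_apply]
    exact mul_decouple_apply_of_eq_zero_on (hcol i) B j
  have hlast : ∀ j, (A.extendLast * N * B.decouple (N (Fin.last n) · ≠ 0)) (Fin.last n) j =
      N (Fin.last n) j := by
    intro j
    rw [mul_apply]
    simp_rw [extendLast_mul_apply_last]
    rw [← mul_apply]
    exact mul_decouple_apply_of_eq_zero_off (fun k hk => not_not.1 hk) B j
  refine isRook_of_isRookRow_last (fun j hj => ?_) (hR.mono fun i j h => ?_)
  · rw [hlast] at hj
    refine ⟨fun j' hj' => (hN j hj).1 j' (by rwa [hlast] at hj'), fun i hi => ?_⟩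
    cases i using Fin.lastCases with
    | last => rfl
    | cast i => rw [htop, if_pos hj] at hi; exact absurd rfl hi
  · rw [submatrix_apply, id, htop] at h
    split_ifs at h with hj
    · exact absurd rfl h
    · exact h

end Rook

section Pivot

variable {F : Type*} [Field F] {n m : ℕ}

theorem exists_isRookRow_of_pivot (M : Matrix (Fin n) (Fin m) F) {r : Fin n} {p : Fin m}
    (hp : M r p ≠ 0) (hleft : ∀ j < p, M r j = 0) (hbelow : ∀ i, r < i → M i p = 0) :
    ∃ (A : Matrix (Fin n) (Fin n) F) (B : Matrix (Fin m) (Fin m) F),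
      A.IsUnitriangular ∧ B.IsUnitriangular ∧ (A * M * B).IsRookRow r := by
  classical
  set v : Fin n → F := fun i => if i < r then -(M i p / M r p) else 0
  set w : Fin m → F := fun j => if p < j then -(M r j / M r p) else 0
  set A : Matrix (Fin n) (Fin n) F := 1 + vecMulVec v (Pi.single r 1)
  set B : Matrix (Fin m) (Fin m) F := 1 + vecMulVec (Pi.single p 1) w
  have hA : A.IsUnitriangular := isUnitriangular_one_add fun i j hji => by
    rcases eq_or_ne j r with rfl | hjr
    · simp [vecMulVec_apply, v, not_lt.2 hji]
    · simp [vecMulVec_apply, hjr]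
  have hB : B.IsUnitriangular := isUnitriangular_one_add fun i j hji => by
    rcases eq_or_ne i p with rfl | hip
    · simp [vecMulVec_apply, w, not_lt.2 hji]
    · simp [vecMulVec_apply, hip]
  have hN : ∀ i j, (A * M * B) i j = M i j + v i * M r j + (M i p + v i * M r p) * w j := by
    intro i j
    simp [A, B, Matrix.add_mul, Matrix.mul_add, vecMulVec_mul, mul_vecMulVec, vecMulVec_apply]
  refine ⟨A, B, hA, hB, isRookRow_of_forall_ne (p := p) (fun j hj => ?_) (fun i hi => ?_)⟩
  · rcases hj.lt_or_gt with h | h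
    · simp [hN, v, w, hleft j h, not_lt.2 h.le]
    · simp [hN, v, w, h, mul_div_cancel₀ _ hp]
  · rcases hi.lt_or_gt with h | h
    · simp [hN, v, w, h, div_mul_cancel₀ _ hp]
    · simp [hN, v, w, hbelow i h, not_lt.2 h.le]

theorem exists_isRookRow_last (M : Matrix (Fin (n + 1)) (Fin m) F) :
    ∃ (A : Matrix (Fin (n + 1)) (Fin (n + 1)) F) (B : Matrix (Fin m) (Fin m) F),
      A.IsUnitriangular ∧ B.IsUnitriangular ∧ (A * M * B).IsRookRow (Fin.last n) := by
  by_cases hpivot : ∃ j, M (Fin.last n) j ≠ 0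
  · obtain ⟨p, hp, hleft⟩ := wellFounded_lt.has_min {j | M (Fin.last n) j ≠ 0} hpivot
    exact exists_isRookRow_of_pivot M hp (fun j hj => by_contra fun h => hleft j h hj)
      fun i hi => absurd hi (not_lt.2 (Fin.le_last i))
  · refine ⟨1, 1, isUnitriangular_one, isUnitriangular_one, fun j hj => (hpivot ⟨j, ?_⟩).elim⟩
    simpa using hj

end Pivot

end Matrix

/-- Existence part of the enhanced Bruhat decomposition: for every `n × m` matrix `M`
over a field there are unitriangular matrices `A`, `B` such that `A * M * B` is a
rook matrix. -/
theorem enhanced_bruhat_existence {F : Type*} [Field F] {n m : ℕ}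
    (M : Matrix (Fin n) (Fin m) F) :
    ∃ (A : Matrix (Fin n) (Fin n) F) (B : Matrix (Fin m) (Fin m) F),
      A.IsUnitriangular ∧ B.IsUnitriangular ∧ (A * M * B).IsRook := by
  classical
  induction n with
  | zero =>
    exact ⟨1, 1, Matrix.isUnitriangular_one, Matrix.isUnitriangular_one, fun i => i.elim0,
      fun i => i.elim0⟩
  | succ n ih =>
    obtain ⟨A₁, B₁, hA₁, hB₁, hN⟩ := Matrix.exists_isRookRow_last M
    obtain ⟨A, B, hA, hB, hR⟩ := ih ((A₁ * M * B₁).submatrix Fin.castSucc id)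
    refine ⟨A.extendLast * A₁, B₁ * B.decouple ((A₁ * M * B₁) (Fin.last n) · ≠ 0),
      hA.extendLast.mul hA₁, hB₁.mul (hB.decouple _), ?_⟩
    simpa only [Matrix.mul_assoc] using Matrix.isRook_extendLast_mul_mul_decouple hN hR
end

section
/- Let M be an n×m matrix with integer entries, and let R be the rook matrix of M regarded as a matrix over ℚ. Then for all unitriangular integer matrices A ∈ T_n(ℤ) and B ∈ T_m(ℤ), the matrix A·M·B (regarded over ℚ) belongs to the set Ll(R); that is, (A·M·B)_{i,j} = R_{i,j} for every position (i,j) that is not covered with respect to R. -/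
/-- A position `(i,j)` is covered w.r.t. a (rook) matrix `R` if there is a nonzero
entry of `R` at a position `(i',j')` with (i < i' and j ≥ j') or (i ≤ i' and j > j'). -/
def Matrix.Covered {n m : ℕ} {F : Type*} [Zero F]
    (R : Matrix (Fin n) (Fin m) F) (i : Fin n) (j : Fin m) : Prop :=
  ∃ i' j', R i' j' ≠ 0 ∧ ((i < i' ∧ j' ≤ j) ∨ (i ≤ i' ∧ j' < j))

/-! Unitriangular matrices form a group, so if `R = A₀ M B₀` then `A M B = (A A₀⁻¹) R (B₀⁻¹ B)`
is again in the two-sided unitriangular orbit of `R`. Multiplying by an upper unitriangular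
matrix on the left adds multiples of lower rows, and on the right multiples of columns further
left; at a position that is not covered, all the entries of `R` that could be added this way
vanish, so the entry is unchanged. -/

namespace Matrix

variable {n : ℕ} {α β : Type*}

theorem IsUnitriangular.isUpperTriangular [Zero α] [One α] {U : Matrix (Fin n) (Fin n) α}
    (hU : U.IsUnitriangular) : U.IsUpperTriangular :=
  fun _ _ h => hU.2 _ _ h

theorem IsUnitriangular.map [NonAssocSemiring α] [NonAssocSemiring β]
    {U : Matrix (Fin n) (Fin n) α} (hU : U.IsUnitriangular) (f : α →+* β) :
    (U.map f).IsUnitriangular :=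
  ⟨fun i => by simp [hU.1 i], fun i j hij => by simp [hU.2 i j hij]⟩

theorem IsUnitriangular.mul_s5 [NonAssocSemiring α] {U V : Matrix (Fin n) (Fin n) α}
    (hU : U.IsUnitriangular) (hV : V.IsUnitriangular) : (U * V).IsUnitriangular := by
  refine ⟨fun i => ?_, fun i j hji => ?_⟩
  · rw [mul_apply, Finset.sum_eq_single i]
    · simp [hU.1, hV.1]
    · intro k _ hki
      rcases lt_or_gt_of_ne hki with hk | hk
      · rw [hU.2 _ _ hk, zero_mul]
      · rw [hV.2 _ _ hk, mul_zero]
    · simp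
  · rw [mul_apply]
    refine Finset.sum_eq_zero fun k _ => ?_
    rcases lt_or_ge k i with hk | hk
    · rw [hU.2 _ _ hk, zero_mul]
    · rw [hV.2 _ _ (hji.trans_le hk), mul_zero]

theorem IsUnitriangular.isUnit_det [CommRing α] {U : Matrix (Fin n) (Fin n) α}
    (hU : U.IsUnitriangular) : IsUnit U.det := by
  rw [det_of_isUpperTriangular hU.isUpperTriangular]
  simp [hU.1]

theorem IsUnitriangular.inv [CommRing α] {U : Matrix (Fin n) (Fin n) α}
    (hU : U.IsUnitriangular) : U⁻¹.IsUnitriangular := by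
  have : Invertible U := U.invertibleOfIsUnitDet hU.isUnit_det
  have hinv : U⁻¹.IsUpperTriangular := blockTriangular_inv_of_blockTriangular hU.isUpperTriangular
  refine ⟨fun i => ?_, fun i j hji => hinv hji⟩
  have hii := congrFun₂ (nonsing_inv_mul U hU.isUnit_det) i i
  rw [mul_apply, Finset.sum_eq_single i, hU.1 i, mul_one, one_apply_eq] at hii
  · exact hii
  · intro k _ hki
    rcases lt_or_gt_of_ne hki with hk | hk
    · rw [hinv hk, zero_mul]
    · rw [hU.2 _ _ hk, mul_zero]
  · simp

variable {m : ℕ} [NonAssocSemiring α]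

theorem IsUnitriangular.mul_apply_eq_zero {U : Matrix (Fin n) (Fin n) α}
    (hU : U.IsUnitriangular) {N : Matrix (Fin n) (Fin m) α} {i : Fin n} {l : Fin m}
    (hN : ∀ k, i ≤ k → N k l = 0) : (U * N) i l = 0 := by
  rw [mul_apply]
  refine Finset.sum_eq_zero fun k _ => ?_
  rcases lt_or_ge k i with hk | hk
  · rw [hU.2 _ _ hk, zero_mul]
  · rw [hN k hk, mul_zero]

theorem IsUnitriangular.mul_apply_eq_self {U : Matrix (Fin n) (Fin n) α}
    (hU : U.IsUnitriangular) {N : Matrix (Fin n) (Fin m) α} {i : Fin n} {l : Fin m}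
    (hN : ∀ k, i < k → N k l = 0) : (U * N) i l = N i l := by
  rw [mul_apply, Finset.sum_eq_single i, hU.1 i, one_mul]
  · intro k _ hki
    rcases lt_or_gt_of_ne hki with hk | hk
    · rw [hU.2 _ _ hk, zero_mul]
    · rw [hN k hk, mul_zero]
  · simp

theorem IsUnitriangular.apply_mul_eq_self {V : Matrix (Fin m) (Fin m) α}
    (hV : V.IsUnitriangular) {N : Matrix (Fin n) (Fin m) α} {i : Fin n} {j : Fin m}
    (hN : ∀ l, l < j → N i l = 0) : (N * V) i j = N i j := by
  rw [mul_apply, Finset.sum_eq_single j, hV.1 j, mul_one]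
  · intro l _ hlj
    rcases lt_or_gt_of_ne hlj with hl | hl
    · rw [hN l hl, zero_mul]
    · rw [hV.2 _ _ hl, mul_zero]
  · simp

theorem IsUnitriangular.mul_mul_apply_of_not_covered {U : Matrix (Fin n) (Fin n) α}
    {V : Matrix (Fin m) (Fin m) α} (hU : U.IsUnitriangular) (hV : V.IsUnitriangular)
    {N : Matrix (Fin n) (Fin m) α} {i : Fin n} {j : Fin m} (hij : ¬ N.Covered i j) :
    (U * N * V) i j = N i j := by
  rw [hV.apply_mul_eq_self fun l hl => hU.mul_apply_eq_zero fun k hk => ?_,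
    hU.mul_apply_eq_self fun k hk => ?_]
  · by_contra hkj
    exact hij ⟨k, j, hkj, .inl ⟨hk, le_rfl⟩⟩
  · by_contra hkl
    exact hij ⟨k, l, hkl, .inr ⟨hk, hl⟩⟩

end Matrix

theorem int_orbit_mem_bruhat_cell_general {n m : ℕ}
    (M : Matrix (Fin n) (Fin m) ℤ) (R : Matrix (Fin n) (Fin m) ℚ)
    (hRorb : ∃ (A₀ : Matrix (Fin n) (Fin n) ℚ) (B₀ : Matrix (Fin m) (Fin m) ℚ),
      A₀.IsUnitriangular ∧ B₀.IsUnitriangular ∧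
      A₀ * M.map (Int.cast : ℤ → ℚ) * B₀ = R) :
    ∀ (A : Matrix (Fin n) (Fin n) ℤ) (B : Matrix (Fin m) (Fin m) ℤ),
      A.IsUnitriangular → B.IsUnitriangular →
      ∀ i j, ¬ R.Covered i j → ((A * M * B) i j : ℚ) = R i j := by
  obtain ⟨A₀, B₀, hA₀, hB₀, rfl⟩ := hRorb
  intro A B hA hB i j hij
  set f := Int.castRingHom ℚ
  have hcast : ((A * M * B) i j : ℚ) = (A.map f * M.map f * B.map f) i j := by
    simp only [← Matrix.map_mul]
    rfl
  have horbit : A.map f * M.map f * B.map f =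
      (A.map f * A₀⁻¹) * (A₀ * M.map f * B₀) * (B₀⁻¹ * B.map f) := by
    simp only [Matrix.mul_assoc, Matrix.mul_nonsing_inv_cancel_left _ _ hB₀.isUnit_det,
      Matrix.nonsing_inv_mul_cancel_left _ _ hA₀.isUnit_det]
  rw [hcast, horbit]
  exact ((hA.map f).mul_s5 hA₀.inv).mul_mul_apply_of_not_covered (hB₀.inv.mul_s5 (hB.map f)) hij

/-- Integral version: if `R` is the rook matrix over `ℚ` of an integer matrix `M`,
then for all unitriangular integer matrices `A`, `B` the matrix `A * M * B`
(regarded over `ℚ`) agrees with `R` at every non-covered position. -/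
theorem int_orbit_mem_bruhat_cell {n m : ℕ}
    (M : Matrix (Fin n) (Fin m) ℤ) (R : Matrix (Fin n) (Fin m) ℚ)
    (hRrook : R.IsRook)
    (hRorb : ∃ (A₀ : Matrix (Fin n) (Fin n) ℚ) (B₀ : Matrix (Fin m) (Fin m) ℚ),
      A₀.IsUnitriangular ∧ B₀.IsUnitriangular ∧
      A₀ * M.map (Int.cast : ℤ → ℚ) * B₀ = R) :
    ∀ (A : Matrix (Fin n) (Fin n) ℤ) (B : Matrix (Fin m) (Fin m) ℤ),
      A.IsUnitriangular → B.IsUnitriangular →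
      ∀ i j, ¬ R.Covered i j → ((A * M * B) i j : ℚ) = R i j :=
  int_orbit_mem_bruhat_cell_general M R hRorb
end

section
/- Let M be a nonzero n×m matrix with integer entries, and let R be the rook matrix of M regarded as a matrix over ℚ. Then R has at least one nonzero entry which is an integer. -/
/-!
Take the pivot of `M` in its last nonzero row `i`, at the first nonzero column `j` of that row.
Left multiplication by a unitriangular matrix adds to row `i` only multiples of the rows below
it, which vanish; right multiplication adds to column `j` only multiples of the entries left of
`j` in row `i`, which vanish too. Hence the `(i, j)` entry of `A * M * B` is the nonzero
integer `M i j`.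
-/

namespace Matrix

theorem exists_lastRow_firstCol_ne_zero {ι κ α : Type*} [Fintype ι] [LinearOrder ι]
    [Fintype κ] [LinearOrder κ] [Zero α] {M : Matrix ι κ α} (hM : M ≠ 0) :
    ∃ i j, M i j ≠ 0 ∧ (∀ k, i < k → ∀ l, M k l = 0) ∧
      ∀ l, l < j → M i l = 0 := by
  classical
  obtain ⟨i₀, j₀, h₀⟩ : ∃ i j, M i j ≠ 0 := by
    by_contra! h
    exact hM (ext h)
  obtain ⟨i, hi, hi_max⟩ := (Finset.univ.filter fun k => ∃ l, M k l ≠ 0).exists_max_image id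
    ⟨i₀, by simpa using ⟨j₀, h₀⟩⟩
  obtain ⟨j, hj, hj_min⟩ := (Finset.univ.filter fun l => M i l ≠ 0).exists_min_image id
    (by simpa [Finset.filter_nonempty_iff] using hi)
  refine ⟨i, j, by simpa using hj, fun k hk l => ?_, fun l hl => ?_⟩
  · by_contra h
    exact (hi_max k (by simpa using ⟨l, h⟩)).not_gt hk
  · by_contra h
    exact (hj_min l (by simpa using h)).not_gt hl

variable {n m : ℕ} {ι α : Type*} [Semiring α]

theorem IsUnitriangular.mul_apply_eq_of_rows_below_eq_zero {A : Matrix (Fin n) (Fin n) α}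
    (hA : A.IsUnitriangular) {N : Matrix (Fin n) ι α} {i : Fin n}
    (hN : ∀ k, i < k → ∀ l, N k l = 0) (l : ι) : (A * N) i l = N i l := by
  rw [mul_apply, Finset.sum_eq_single i]
  · rw [hA.1 i, one_mul]
  · intro k _ hki
    rcases lt_or_gt_of_ne hki with h | h
    · rw [hA.2 i k h, zero_mul]
    · rw [hN k h l, mul_zero]
  · simp

theorem IsUnitriangular.mul_apply_eq_of_cols_left_eq_zero {B : Matrix (Fin m) (Fin m) α}
    (hB : B.IsUnitriangular) {N : Matrix ι (Fin m) α} {i : ι} {j : Fin m}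
    (hN : ∀ l, l < j → N i l = 0) : (N * B) i j = N i j := by
  rw [mul_apply, Finset.sum_eq_single j]
  · rw [hB.1 j, mul_one]
  · intro l _ hlj
    rcases lt_or_gt_of_ne hlj with h | h
    · rw [hN l h, zero_mul]
    · rw [hB.2 l j h, mul_zero]
  · simp

theorem IsUnitriangular.mul_mul_apply_eq_of_rows_below_of_cols_left
    {A : Matrix (Fin n) (Fin n) α} {B : Matrix (Fin m) (Fin m) α}
    (hA : A.IsUnitriangular) (hB : B.IsUnitriangular)
    {N : Matrix (Fin n) (Fin m) α} {i : Fin n} {j : Fin m}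
    (h_below : ∀ k, i < k → ∀ l, N k l = 0) (h_left : ∀ l, l < j → N i l = 0) :
    (A * N * B) i j = N i j := by
  have h_row : (A * N) i = N i := funext (hA.mul_apply_eq_of_rows_below_eq_zero h_below)
  calc (A * N * B) i j = (N * B) i j := by rw [mul_apply, h_row, mul_apply]
    _ = N i j := hB.mul_apply_eq_of_cols_left_eq_zero h_left

end Matrix

theorem rook_matrix_has_integer_entry_general {n m : ℕ}
    (M : Matrix (Fin n) (Fin m) ℤ) (hM : M ≠ 0)
    (R : Matrix (Fin n) (Fin m) ℚ)
    (hRorb : ∃ (A : Matrix (Fin n) (Fin n) ℚ) (B : Matrix (Fin m) (Fin m) ℚ),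
      A.IsUnitriangular ∧ B.IsUnitriangular ∧
      A * M.map (Int.cast : ℤ → ℚ) * B = R) :
    ∃ i j, R i j ≠ 0 ∧ ∃ z : ℤ, R i j = (z : ℚ) := by
  obtain ⟨A, B, hA, hB, rfl⟩ := hRorb
  obtain ⟨i, j, hij, h_below, h_left⟩ := Matrix.exists_lastRow_firstCol_ne_zero hM
  have hR : (A * M.map (Int.cast : ℤ → ℚ) * B) i j = M i j :=
    hA.mul_mul_apply_eq_of_rows_below_of_cols_left hB (N := M.map Int.cast)
      (fun k hk l => by simp [h_below k hk l]) (fun l hl => by simp [h_left l hl])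
  exact ⟨i, j, by rw [hR]; exact_mod_cast hij, M i j, hR⟩

/-- If `M` is a nonzero integer matrix, then its rook matrix over `ℚ` has at least
one nonzero entry which is an integer. -/
theorem rook_matrix_has_integer_entry {n m : ℕ}
    (M : Matrix (Fin n) (Fin m) ℤ) (hM : M ≠ 0)
    (R : Matrix (Fin n) (Fin m) ℚ) (hRrook : R.IsRook)
    (hRorb : ∃ (A : Matrix (Fin n) (Fin n) ℚ) (B : Matrix (Fin m) (Fin m) ℚ),
      A.IsUnitriangular ∧ B.IsUnitriangular ∧
      A * M.map (Int.cast : ℤ → ℚ) * B = R) :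
    ∃ i j, R i j ≠ 0 ∧ ∃ z : ℤ, R i j = (z : ℚ) :=
  rook_matrix_has_integer_entry_general M hM R hRorb
end

section
/- Let M be a nonzero n×m matrix with integer entries. Then there exists a position (i,j) such that for all unitriangular integer matrices A ∈ T_n(ℤ) and B ∈ T_m(ℤ) one has (A·M·B)_{i,j} = M_{i,j}, and moreover M_{i,j} ≠ 0. In other words, some (nonzero) entry of M is the same for every matrix in the orbit of M under the action of T_n(ℤ) × T_m(ℤ). -/
/-!
Take the lowest nonzero row `i` of `M` and its leftmost nonzero entry `(i, j)`. Row `i` of `A * M`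
is row `i` of `M` plus a combination of the rows below it, which vanish; entry `j` of row `i`
of `(A * M) * B` is `M i j` plus a combination of the entries to its left, which vanish too.
-/

theorem Function.exists_ne_zero_forall_lt_eq_zero {α β : Type*} [LT α] [WellFoundedLT α]
    [Zero β] {f : α → β} (hf : f ≠ 0) : ∃ a, f a ≠ 0 ∧ ∀ b < a, f b = 0 := by
  obtain ⟨a, ha, hmin⟩ := wellFounded_lt.has_min {a | f a ≠ 0}
    (Function.ne_iff.mp hf)
  exact ⟨a, ha, fun b hb => not_not.mp fun hfb => hmin b hfb hb⟩

theorem Function.exists_ne_zero_forall_gt_eq_zero {α β : Type*} [LT α] [WellFoundedGT α]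
    [Zero β] {f : α → β} (hf : f ≠ 0) : ∃ a, f a ≠ 0 ∧ ∀ b, a < b → f b = 0 :=
  Function.exists_ne_zero_forall_lt_eq_zero (α := αᵒᵈ) hf

namespace Matrix.IsUnitriangular

variable {R : Type*} [NonAssocSemiring R]

theorem mul_apply_of_rows_below_eq_zero {n : ℕ} {κ : Type*} {A : Matrix (Fin n) (Fin n) R}
    (hA : A.IsUnitriangular) {M : Matrix (Fin n) κ R} {i : Fin n}
    (hbelow : ∀ k, i < k → M k = 0) (l : κ) : (A * M) i l = M i l := by
  rw [mul_apply, Finset.sum_eq_single i]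
  · rw [hA.1 i, one_mul]
  · intro k _ hki
    rcases lt_or_gt_of_ne hki with hk | hk
    · rw [hA.2 i k hk, zero_mul]
    · rw [hbelow k hk, Pi.zero_apply, mul_zero]
  · exact absurd (Finset.mem_univ i)

theorem mul_apply_of_entries_left_eq_zero {m : ℕ} {ι : Type*} {B : Matrix (Fin m) (Fin m) R}
    (hB : B.IsUnitriangular) {M : Matrix ι (Fin m) R} {i : ι} {j : Fin m}
    (hleft : ∀ l < j, M i l = 0) : (M * B) i j = M i j := by
  rw [mul_apply, Finset.sum_eq_single j]
  · rw [hB.1 j, mul_one]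
  · intro l _ hlj
    rcases lt_or_gt_of_ne hlj with hl | hl
    · rw [hleft l hl, zero_mul]
    · rw [hB.2 l j hl, mul_zero]
  · exact absurd (Finset.mem_univ j)

end Matrix.IsUnitriangular

/-- Some nonzero entry of a nonzero integer matrix `M` is the same for every matrix
in the orbit of `M` under the action of `T_n(ℤ) × T_m(ℤ)`. -/
theorem exists_invariant_entry {n m : ℕ}
    (M : Matrix (Fin n) (Fin m) ℤ) (hM : M ≠ 0) :
    ∃ i j, M i j ≠ 0 ∧
      ∀ (A : Matrix (Fin n) (Fin n) ℤ) (B : Matrix (Fin m) (Fin m) ℤ),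
        A.IsUnitriangular → B.IsUnitriangular → (A * M * B) i j = M i j := by
  obtain ⟨i, hi, hbelow⟩ := Function.exists_ne_zero_forall_gt_eq_zero hM
  obtain ⟨j, hj, hleft⟩ := Function.exists_ne_zero_forall_lt_eq_zero hi
  refine ⟨i, j, hj, fun A B hA hB => ?_⟩
  have hrow : ∀ l, (A * M) i l = M i l := hA.mul_apply_of_rows_below_eq_zero hbelow
  rw [hB.mul_apply_of_entries_left_eq_zero (fun l hl => (hrow l).trans (hleft l hl)), hrow]
end

section
/- Let M be an n×m matrix with integer entries, and let R be the rook matrix of M regarded as a matrix over ℚ. If (i,j) is a position with R_{i,j} ≠ 0 which is not covered with respect to R, then R_{i,j} is an integer; in fact R_{i,j} = M_{i,j}. -/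
namespace Matrix

section UpperTriangular

variable {ι κ α : Type*} [Fintype ι] [LinearOrder ι] [NonUnitalNonAssocSemiring α]

theorem IsUpperTriangular.mul_apply_eq_diag_mul {A : Matrix ι ι α} {R : Matrix ι κ α}
    (hA : A.IsUpperTriangular) {i : ι} {l : κ} (hR : ∀ k, i < k → R k l = 0) :
    (A * R) i l = A i i * R i l := by
  rw [mul_apply, Finset.sum_eq_single i]
  · intro k _ hki
    rcases hki.lt_or_gt with hki | hik
    · rw [hA hki, zero_mul]
    · rw [hR k hik, mul_zero]
  · simp

theorem IsUpperTriangular.mul_apply_eq_mul_diag {B : Matrix ι ι α} {R : Matrix κ ι α}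
    (hB : B.IsUpperTriangular) {k : κ} {j : ι} (hR : ∀ l, l < j → R k l = 0) :
    (R * B) k j = R k j * B j j := by
  rw [mul_apply, Finset.sum_eq_single j]
  · intro l _ hlj
    rcases hlj.lt_or_gt with hlj | hjl
    · rw [hR l hlj, zero_mul]
    · rw [hB hjl, mul_zero]
  · simp

end UpperTriangular

theorem mul_mul_apply_of_not_covered {n m : ℕ} {α : Type*} [NonUnitalNonAssocSemiring α]
    {A : Matrix (Fin n) (Fin n) α} {R : Matrix (Fin n) (Fin m) α} {B : Matrix (Fin m) (Fin m) α}
    (hA : A.IsUpperTriangular) (hB : B.IsUpperTriangular) {i : Fin n} {j : Fin m}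
    (hnc : ¬ R.Covered i j) :
    (A * R * B) i j = A i i * R i j * B j j := by
  have hR : ∀ k l, i ≤ k → l ≤ j → (i < k ∨ l < j) → R k l = 0 := by
    intro k l hik hlj hne
    by_contra hkl
    rcases hne with hik' | hlj'
    · exact hnc ⟨k, l, hkl, .inl ⟨hik', hlj⟩⟩
    · exact hnc ⟨k, l, hkl, .inr ⟨hik, hlj'⟩⟩
  have hAR_left : ∀ l, l < j → (A * R) i l = 0 := fun l hlj => by
    rw [hA.mul_apply_eq_diag_mul fun k hik => hR k l hik.le hlj.le (.inl hik),
      hR i l le_rfl hlj.le (.inr hlj), mul_zero]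
  rw [hB.mul_apply_eq_mul_diag hAR_left,
    hA.mul_apply_eq_diag_mul fun k hik => hR k j hik.le le_rfl (.inl hik)]

namespace IsUnitriangular

variable {n : ℕ} {α : Type*} [CommRing α] {A : Matrix (Fin n) (Fin n) α}

theorem isUpperTriangular_s9 (hA : A.IsUnitriangular) : A.IsUpperTriangular :=
  fun i j h => hA.2 i j h

theorem det_eq_one (hA : A.IsUnitriangular) : A.det = 1 := by
  rw [det_of_isUpperTriangular hA.isUpperTriangular_s9]
  simp [hA.1]

theorem isUnit_det_s9 (hA : A.IsUnitriangular) : IsUnit A.det := by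
  simp [hA.det_eq_one]

theorem inv_s9 (hA : A.IsUnitriangular) : A⁻¹.IsUnitriangular := by
  have := A.invertibleOfIsUnitDet hA.isUnit_det_s9
  have hinv : A⁻¹.IsUpperTriangular :=
    blockTriangular_inv_of_blockTriangular hA.isUpperTriangular_s9
  refine ⟨fun i => ?_, fun i j h => hinv h⟩
  have hdiag := congrFun (congrFun (nonsing_inv_mul A hA.isUnit_det_s9) i) i
  rwa [hA.isUpperTriangular_s9.mul_apply_eq_mul_diag fun l (hli : l < i) => hinv hli, hA.1, mul_one,
    one_apply_eq] at hdiag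

end IsUnitriangular

end Matrix

theorem noncovered_rook_entry_eq_int_general {n m : ℕ}
    (M : Matrix (Fin n) (Fin m) ℤ) (R : Matrix (Fin n) (Fin m) ℚ)
    (hRorb : ∃ (A : Matrix (Fin n) (Fin n) ℚ) (B : Matrix (Fin m) (Fin m) ℚ),
      A.IsUnitriangular ∧ B.IsUnitriangular ∧
      A * M.map (Int.cast : ℤ → ℚ) * B = R)
    (i : Fin n) (j : Fin m) (hnc : ¬ R.Covered i j) :
    R i j = (M i j : ℚ) := by
  obtain ⟨A, B, hA, hB, hABR⟩ := hRorb
  have hM : M.map (Int.cast : ℤ → ℚ) = A⁻¹ * R * B⁻¹ := by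
    rw [← hABR, Matrix.mul_assoc A, Matrix.nonsing_inv_mul_cancel_left _ _ hA.isUnit_det_s9,
      Matrix.mul_nonsing_inv_cancel_right _ _ hB.isUnit_det_s9]
  calc R i j = A⁻¹ i i * R i j * B⁻¹ j j := by rw [hA.inv_s9.1, hB.inv_s9.1, one_mul, mul_one]
    _ = (A⁻¹ * R * B⁻¹) i j :=
      (Matrix.mul_mul_apply_of_not_covered hA.inv_s9.isUpperTriangular_s9
        hB.inv_s9.isUpperTriangular_s9 hnc).symm
    _ = M i j := by rw [← hM, Matrix.map_apply]

/-- A nonzero entry of the rook matrix (over `ℚ`) of an integer matrix `M` located at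
a non-covered position is an integer; in fact it equals the corresponding entry of `M`. -/
theorem noncovered_rook_entry_eq_int {n m : ℕ}
    (M : Matrix (Fin n) (Fin m) ℤ) (R : Matrix (Fin n) (Fin m) ℚ)
    (hRrook : R.IsRook)
    (hRorb : ∃ (A : Matrix (Fin n) (Fin n) ℚ) (B : Matrix (Fin m) (Fin m) ℚ),
      A.IsUnitriangular ∧ B.IsUnitriangular ∧
      A * M.map (Int.cast : ℤ → ℚ) * B = R)
    (i : Fin n) (j : Fin m) (hij : R i j ≠ 0) (hnc : ¬ R.Covered i j) :
    R i j = (M i j : ℚ) :=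
  noncovered_rook_entry_eq_int_general M R hRorb i j hnc
end

section
/- Let F be a field, let M be an invertible n×n matrix over F and let R be the rook matrix of M. Then R is a monomial matrix, so there is a unique permutation σ of {1, …, n} such that R_{σ(j), j} ≠ 0 for all j. Moreover, the product of the nonzero entries of R equals the sign of σ times the determinant of M: ∏_{j=1}^{n} R_{σ(j), j} = sign(σ) · det M. -/
/-!
Unitriangular factors have determinant one, so `det R = det M ≠ 0`. Hence no column of `R`
vanishes, and by the rook condition the row of the nonzero entry of each column is an injective,
hence bijective, function `σ`. In the Leibniz expansion of `det R` only the term of `σ` survives,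
so `det R = sign σ * ∏ j, R (σ j) j`, and `sign σ ^ 2 = 1` finishes the proof.
-/

namespace Matrix

open Equiv

variable {n : ℕ} {α : Type*}

theorem IsUnitriangular.det_eq_one_s15 [CommRing α] {A : Matrix (Fin n) (Fin n) α}
    (hA : A.IsUnitriangular) : A.det = 1 := by
  rw [det_of_isUpperTriangular hA.2]
  simp [hA.1]

theorem det_mul_mul_of_isUnitriangular [CommRing α] {A B : Matrix (Fin n) (Fin n) α}
    (hA : A.IsUnitriangular) (hB : B.IsUnitriangular) (M : Matrix (Fin n) (Fin n) α) :
    (A * M * B).det = M.det := by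
  rw [det_mul, det_mul, hA.det_eq_one_s15, hB.det_eq_one_s15, one_mul, mul_one]

namespace IsRook

theorem perm_eq_of_apply_ne_zero [Zero α] {R : Matrix (Fin n) (Fin n) α} (hR : R.IsRook)
    {σ τ : Perm (Fin n)} (hσ : ∀ j, R (σ j) j ≠ 0) (hτ : ∀ j, R (τ j) j ≠ 0) : τ = σ :=
  Equiv.ext fun j => hR.2 _ _ j (hτ j) (hσ j)

theorem exists_perm_apply_ne_zero [CommRing α] {R : Matrix (Fin n) (Fin n) α}
    (hR : R.IsRook) (hdet : R.det ≠ 0) : ∃ σ : Perm (Fin n), ∀ j, R (σ j) j ≠ 0 := by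
  have hcol : ∀ j, ∃ i, R i j ≠ 0 := fun j => by
    by_contra! h
    exact hdet (det_eq_zero_of_column_eq_zero j h)
  choose f hf using hcol
  have hf_inj : Function.Injective f := fun j j' h => hR.1 (f j) j j' (hf j) (h ▸ hf j')
  exact ⟨Equiv.ofBijective f hf_inj.bijective_of_finite, hf⟩

theorem det_eq_sign_mul_prod [CommRing α] {R : Matrix (Fin n) (Fin n) α} (hR : R.IsRook)
    {σ : Perm (Fin n)} (hσ : ∀ j, R (σ j) j ≠ 0) :
    R.det = (Perm.sign σ : ℤ) * ∏ j, R (σ j) j := by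
  rw [det_apply', Finset.sum_eq_single σ (fun τ _ hτ => ?_) (by simp)]
  -- Some column `j` is matched differently by `τ`, and the rook condition kills `R (τ j) j`.
  obtain ⟨j, hj⟩ := not_forall.mp (mt Equiv.ext hτ)
  have hzero : R (τ j) j = 0 := by
    by_contra hne
    exact hj (hR.2 _ _ j hne (hσ j))
  exact mul_eq_zero_of_right _ (Finset.prod_eq_zero (Finset.mem_univ j) hzero)

end IsRook

end Matrix

/-- The rook matrix `R` of an invertible matrix `M` is a monomial matrix: there is a
unique permutation `σ` with `R (σ j) j ≠ 0` for all `j`, and the product of the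
nonzero entries of `R` equals `sign σ * det M`. -/
theorem rook_matrix_of_invertible_det {F : Type*} [Field F] {n : ℕ}
    (M R : Matrix (Fin n) (Fin n) F) (hM : IsUnit M) (hRrook : R.IsRook)
    (hRorb : ∃ (A B : Matrix (Fin n) (Fin n) F),
      A.IsUnitriangular ∧ B.IsUnitriangular ∧ A * M * B = R) :
    ∃ σ : Equiv.Perm (Fin n),
      (∀ j, R (σ j) j ≠ 0) ∧
      (∀ σ' : Equiv.Perm (Fin n), (∀ j, R (σ' j) j ≠ 0) → σ' = σ) ∧
      ∏ j, R (σ j) j = ((Equiv.Perm.sign σ : ℤ) : F) * M.det := by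
  obtain ⟨A, B, hA, hB, hABM⟩ := hRorb
  have hdet : R.det = M.det := hABM ▸ Matrix.det_mul_mul_of_isUnitriangular hA hB M
  have hdetM : M.det ≠ 0 := ((Matrix.isUnit_iff_isUnit_det M).mp hM).ne_zero
  obtain ⟨σ, hσ⟩ := hRrook.exists_perm_apply_ne_zero (hdet ▸ hdetM)
  refine ⟨σ, hσ, fun σ' hσ' => hRrook.perm_eq_of_apply_ne_zero hσ hσ', ?_⟩
  rw [← hdet, hRrook.det_eq_sign_mul_prod hσ, ← mul_assoc, ← Int.cast_mul,
    Int.units_coe_mul_self, Int.cast_one, one_mul]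
end

section
/- Let F be a field, let V and W be finite-dimensional F-vector spaces with dim V = n and dim W = m, let A : V → W be an injective linear map, and let w = (w_1, …, w_m) be an ordered basis of W. Then there exist an ordered basis w' = (w'_1, …, w'_m) of W unitriangularly equivalent to w, an ordered basis v = (v_1, …, v_n) of V, and a strictly increasing map t : {1, …, n} → {1, …, m} such that A(v_s) = w'_{t(s)} for every s ∈ {1, …, n}. -/
/-- Two ordered bases `v`, `v'` are unitriangularly equivalent if for each `s`
the vector `v' s - v s` lies in the span of the preceding vectors `v t`, `t < s`. -/
def UnitriEquiv {F V : Type*} [Field F] [AddCommGroup V] [Module F V] {n : ℕ}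
    (v v' : Module.Basis (Fin n) F V) : Prop :=
  ∀ s : Fin n, v' s - v s ∈ Submodule.span F (v '' {t : Fin n | t < s})

open Submodule Module Set

namespace Module.Basis

section Unitriangular

variable {ι R M : Type*} [LinearOrder ι] [CommRing R] [AddCommGroup M] [Module R M]
  (b : Basis ι R M) {f : ι → M}

theorem repr_eq_ite_of_sub_mem_span {x : M} {i : ι} (hx : x - b i ∈ span R (b '' {j | j < i}))
    {j : ι} (hij : i ≤ j) : b.repr x j = if i = j then 1 else 0 := by
  rw [mem_span_image] at hx
  have : b.repr (x - b i) j = 0 := Finsupp.notMem_support_iff.mp fun h => (hx h).not_ge hij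
  rwa [map_sub, Finsupp.sub_apply, sub_eq_zero, repr_self, Finsupp.single_apply] at this

theorem det_eq_one_of_sub_mem_span [Fintype ι]
    (hf : ∀ i, f i - b i ∈ span R (b '' {j | j < i})) : b.det f = 1 := by
  have hupper : (b.toMatrix f).IsUpperTriangular := fun i j (hji : j < i) => by
    rw [toMatrix_apply, b.repr_eq_ite_of_sub_mem_span (hf j) hji.le, if_neg hji.ne]
  rw [det_apply, Matrix.det_of_isUpperTriangular hupper]
  exact Finset.prod_eq_one fun i _ => by
    rw [toMatrix_apply, b.repr_eq_ite_of_sub_mem_span (hf i) le_rfl, if_pos rfl]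

theorem linearIndependent_and_span_eq_top_of_sub_mem_span [Fintype ι]
    (hf : ∀ i, f i - b i ∈ span R (b '' {j | j < i})) :
    LinearIndependent R f ∧ span R (range f) = ⊤ :=
  b.is_basis_iff_det.mpr (b.det_eq_one_of_sub_mem_span hf ▸ isUnit_one)

noncomputable def ofUnitriangular [Fintype ι]
    (hf : ∀ i, f i - b i ∈ span R (b '' {j | j < i})) : Basis ι R M :=
  .mk (b.linearIndependent_and_span_eq_top_of_sub_mem_span hf).1
    (b.linearIndependent_and_span_eq_top_of_sub_mem_span hf).2.ge

@[simp]
theorem coe_ofUnitriangular [Fintype ι] (hf : ∀ i, f i - b i ∈ span R (b '' {j | j < i})) :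
    ⇑(b.ofUnitriangular hf) = f :=
  coe_mk _ _

end Unitriangular

section Pivots

variable {ι K M : Type*} [LinearOrder ι] [Field K] [AddCommGroup M] [Module K M]
  (b : Basis ι K M) (U : Submodule K M)

def IsPivot (k : ι) : Prop :=
  ∃ u ∈ U, b.repr u k = 1 ∧ ∀ j, k < j → b.repr u j = 0

open Classical in
noncomputable def adaptedFamily (k : ι) : M :=
  if h : b.IsPivot U k then h.choose else b k

theorem adaptedFamily_sub_mem_span (k : ι) :
    b.adaptedFamily U k - b k ∈ span K (b '' {j | j < k}) := by
  unfold adaptedFamily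
  split_ifs with h
  · obtain ⟨-, hk, hlt⟩ := h.choose_spec
    rw [mem_span_image]
    intro j hj
    by_contra hjk
    apply Finsupp.mem_support_iff.mp hj
    rcases (not_lt.mp hjk).eq_or_lt with rfl | hkj
    · simp [hk]
    · simp [hlt j hkj, hkj.ne]
  · simp

theorem adaptedFamily_mem {k : ι} (hk : b.IsPivot U k) : b.adaptedFamily U k ∈ U := by
  simpa [adaptedFamily, hk] using hk.choose_spec.1

variable [Fintype ι]

noncomputable def adaptedBasis : Basis ι K M :=
  b.ofUnitriangular (b.adaptedFamily_sub_mem_span U)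

@[simp]
theorem coe_adaptedBasis : ⇑(b.adaptedBasis U) = b.adaptedFamily U :=
  b.coe_ofUnitriangular _

open Classical in
noncomputable def pivots : Finset ι :=
  {k | b.IsPivot U k}

theorem mem_pivots {k : ι} : k ∈ b.pivots U ↔ b.IsPivot U k := by
  simp [pivots]

theorem exists_mem_pivots_repr_ne_zero {u : M} (hu : u ∈ U) (hu0 : u ≠ 0) :
    ∃ k ∈ b.pivots U, b.repr u k ≠ 0 := by
  have hsupp : (b.repr u).support.Nonempty :=
    Finsupp.support_nonempty_iff.mpr (by simpa using hu0)
  set k := (b.repr u).support.max' hsupp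
  have hk : b.repr u k ≠ 0 := Finsupp.mem_support_iff.mp (Finset.max'_mem _ _)
  refine ⟨k, (b.mem_pivots U).mpr ⟨(b.repr u k)⁻¹ • u, U.smul_mem _ hu, by simp [hk],
    fun j hj => ?_⟩, hk⟩
  have : b.repr u j = 0 :=
    Finsupp.notMem_support_iff.mp fun h => (Finset.le_max' _ _ h).not_gt hj
  simp [this]

theorem finrank_le_card_pivots : finrank K U ≤ (b.pivots U).card := by
  let φ : U →ₗ[K] (b.pivots U → K) := LinearMap.pi fun k => (b.coord k).comp U.subtype
  have hφ : Function.Injective φ := by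
    refine (injective_iff_map_eq_zero φ).mpr fun u hu => ?_
    by_contra hu0
    obtain ⟨k, hk, hne⟩ := b.exists_mem_pivots_repr_ne_zero U u.2 (by simpa using hu0)
    exact hne (congrFun hu ⟨k, hk⟩)
  simpa using LinearMap.finrank_le_finrank_of_injective hφ

theorem adaptedBasis_mem {k : ι} (hk : k ∈ b.pivots U) : b.adaptedBasis U k ∈ U := by
  simpa using b.adaptedFamily_mem U ((b.mem_pivots U).mp hk)

theorem adaptedBasis_sub_mem_span (k : ι) :
    b.adaptedBasis U k - b k ∈ span K (b '' {j | j < k}) := by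
  simpa using b.adaptedFamily_sub_mem_span U k

theorem card_pivots_le_finrank : (b.pivots U).card ≤ finrank K U := by
  have : Module.Finite K M := .of_basis b
  let g : b.pivots U → M := fun k => b.adaptedBasis U k
  have hg : LinearIndependent K g :=
    (b.adaptedBasis U).linearIndependent.comp _ Subtype.val_injective
  calc (b.pivots U).card = finrank K (span K (range g)) := by
        rw [finrank_span_eq_card hg, Fintype.card_coe]
    _ ≤ finrank K U := Submodule.finrank_mono <| span_le.mpr <| range_subset_iff.mpr fun k =>
        b.adaptedBasis_mem U k.2

theorem card_pivots_eq_finrank : (b.pivots U).card = finrank K U :=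
  (b.card_pivots_le_finrank U).antisymm (b.finrank_le_card_pivots U)

end Pivots

end Module.Basis

theorem LinearMap.exists_basis_apply_eq {ι K V W : Type*} [Fintype ι] [Field K]
    [AddCommGroup V] [Module K V] [AddCommGroup W] [Module K W] [FiniteDimensional K V]
    (A : V →ₗ[K] W) {g : ι → W} (hg : LinearIndependent K g)
    (hgA : ∀ i, g i ∈ LinearMap.range A) (hcard : Fintype.card ι = finrank K V) :
    ∃ v : Basis ι K V, ∀ i, A (v i) = g i := by
  choose x hx using hgA
  have hx' : A ∘ x = g := funext hx
  have hli : LinearIndependent K x := .of_comp A (hx' ▸ hg)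
  exact ⟨basisOfLinearIndependentOfCardEqFinrank' x hli hcard, by simpa using hx⟩

/-- For an injective linear map `A : V → W` and a basis `w` of `W`, one can find a
basis `w'` of `W` unitriangularly equivalent to `w`, a basis `v` of `V`, and a
strictly increasing map `t` such that `A (v s) = w' (t s)` for every `s`. -/
theorem injective_basis_adapted {F V W : Type*} [Field F]
    [AddCommGroup V] [Module F V] [AddCommGroup W] [Module F W]
    {n m : ℕ} (hV : Module.finrank F V = n)
    (A : V →ₗ[F] W) (hA : Function.Injective A)
    (w : Module.Basis (Fin m) F W) :
    ∃ (w' : Module.Basis (Fin m) F W) (v : Module.Basis (Fin n) F V) (t : Fin n → Fin m),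
      UnitriEquiv w w' ∧ StrictMono t ∧ ∀ s, A (v s) = w' (t s) := by
  have : FiniteDimensional F W := .of_basis w
  have : FiniteDimensional F V := .of_injective A hA
  set T := w.pivots (LinearMap.range A)
  have hT : T.card = n := by
    rw [w.card_pivots_eq_finrank, LinearMap.finrank_range_of_inj hA, hV]
  set t : Fin n → Fin m := fun s => T.orderIsoOfFin hT s
  have ht : StrictMono t := fun a b hab => (T.orderIsoOfFin hT).strictMono hab
  set w' := w.adaptedBasis (LinearMap.range A)
  obtain ⟨v, hv⟩ := A.exists_basis_apply_eq (w'.linearIndependent.comp t ht.injective)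
    (fun s => w.adaptedBasis_mem _ (T.orderIsoOfFin hT s).2) (by simp [hV])
  exact ⟨w', v, t, w.adaptedBasis_sub_mem_span _, ht, hv⟩
end
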